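/- arXiv:1005.4628 — 2 statements merged into one kernel-verified Lean document; each statement's English description precedes it below -/
import Mathlib

section
/- If P = {p₁, p₂, p₃} on the sphere S² with μ(p₁) = (λ₁, λ₂) a partition of d into two parts, μ(p₂) = (d), and μ(p₃) = (2, 1, …, 1), then H^d_{S²}(P, μ) = 1/|Aut(μ(p₁))|, where |Aut(μ(p₁))| = 2 if λ₁ = λ₂ and 1 otherwise. -/
open Equiv

/-- The full cycle type of a permutation of `Fin d`: its cycle type together with
a part `1` for each fixed point. This is the ramification profile (a partition of `d`). -/
def fullCycleType {d : ℕ} (σ : Perm (Fin d)) : Multiset ℕ :=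
  σ.cycleType + Multiset.replicate (d - σ.cycleType.sum) 1

/-- The number of cycles (including fixed points) of a permutation, i.e. the length of
its full cycle type. -/
def cycleCount {d : ℕ} (σ : Perm (Fin d)) : ℕ := (fullCycleType σ).card

/-- The order of the automorphism group of a partition: permutations of the parts
preserving part sizes. -/
def autPartition (μ : Multiset ℕ) : ℕ := μ.toFinset.prod fun i => (μ.count i).factorial

/-- A tuple of permutations generates a transitive subgroup. -/
def IsTransitiveTuple {d n : ℕ} (σ : Fin n → Perm (Fin d)) : Prop :=
  ∀ x y : Fin d, ∃ g ∈ Subgroup.closure (Set.range σ), g x = y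

/-- The Hurwitz number of the sphere with `n` branch points and ramification profiles
`μ i`, defined via monodromy: the number of tuples of permutations with the given
cycle types, product the identity, generating a transitive subgroup, divided by `d!`. -/
noncomputable def sphereHurwitz (d n : ℕ) (μ : Fin n → Multiset ℕ) : ℚ :=
  (Nat.card {σ : Fin n → Perm (Fin d) //
      (∀ i, fullCycleType (σ i) = μ i) ∧ (List.ofFn σ).prod = 1 ∧ IsTransitiveTuple σ} : ℚ)
    / (Nat.factorial d)

/-!
In the monodromy description `σ₀ σ₁ σ₂ = 1`, `σ₁` is a `d`-cycle (so the tuple is automatically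
transitive), `σ₂` is a transposition, and `σ₀ = (σ₁ σ₂)⁻¹` is determined by them and has the cycle
type of `σ₂ σ₁`. So one counts pairs `(c, τ)` of a `d`-cycle and a transposition such that `τ c`
has cycle type `(l₁, l₂)`. Writing `c = (x, c x, …, c^(d-1) x)`, the product `swap x (c^k x) * c`
splits `c` into cycles of lengths `k` and `d - k`; hence `S_d` acts transitively on these pairs by
conjugation, with base point `(c, swap x (c^l₁ x))`. A stabilizing permutation centralizes `c`, so
it is a power of `c` determined by where it sends `x`: the stabilizer is trivial, or `{1, c^l₁}`
when `l₁ = l₂`. The orbit–stabilizer theorem gives `d! / |Aut(l₁, l₂)|` pairs.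
-/

open Equiv.Perm

namespace List
variable {α : Type*} [DecidableEq α]

theorem formPerm_cons_append_cons {a b : α} {l m : List α} (h : (a :: l ++ b :: m).Nodup) :
    formPerm (a :: l ++ b :: m) = Equiv.swap a b * formPerm (a :: l) * formPerm (b :: m) := by
  induction l generalizing a with
  | nil => simp
  | cons a' l ih =>
    have hrest : (a' :: l ++ b :: m).Nodup := (List.nodup_cons.mp h).2
    have hab : a ≠ b := fun e => (List.nodup_cons.mp h).1 (e ▸ by simp)
    have ha'b : a' ≠ b := fun e => (List.nodup_cons.mp hrest).1 (e ▸ by simp)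
    have hconj : Equiv.swap a a' * Equiv.swap a' b = Equiv.swap a b * Equiv.swap a a' := by
      rw [mul_swap_eq_swap_mul, swap_apply_right, swap_apply_of_ne_of_ne hab.symm ha'b.symm]
    calc formPerm (a :: a' :: l ++ b :: m)
        = Equiv.swap a a' * formPerm (a' :: l ++ b :: m) := formPerm_cons_cons ..
      _ = _ := by rw [ih hrest, formPerm_cons_cons]; simp only [← mul_assoc, hconj]

theorem formPerm_append_of_ne_nil {l m : List α} (hl : l ≠ []) (hm : m ≠ []) (h : (l ++ m).Nodup) :
    formPerm (l ++ m) = Equiv.swap (l.head hl) (m.head hm) * formPerm l * formPerm m := by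
  obtain ⟨a, l, rfl⟩ := List.exists_cons_of_ne_nil hl
  obtain ⟨b, m, rfl⟩ := List.exists_cons_of_ne_nil hm
  exact formPerm_cons_append_cons h

theorem disjoint_formPerm_of_disjoint {l m : List α} (h : l.Disjoint m) :
    Equiv.Perm.Disjoint (formPerm l) (formPerm m) := by
  intro x
  by_cases hx : x ∈ l
  · exact Or.inr (formPerm_apply_of_notMem fun hm => h hx hm)
  · exact Or.inl (formPerm_apply_of_notMem hx)

theorem cycleType_formPerm_of_nodup [Fintype α] {l : List α} (h : l.Nodup) :
    (formPerm l).cycleType = ({l.length} : Multiset ℕ).filter (2 ≤ ·) := by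
  rw [Multiset.filter_singleton]
  split_ifs with hl
  · rw [(isCycle_formPerm h hl).cycleType, support_formPerm_of_nodup _ h, card_toFinset,
      dedup_eq_self.mpr h]
    rintro x rfl
    simp at hl
  · rw [(formPerm_eq_one_iff _ h).mpr (by omega), cycleType_one]
    rfl

end List

namespace Equiv.Perm
variable {α : Type*} [Fintype α] [DecidableEq α]

theorem parts_partition_eq_iff {σ : Perm α} {μ : Multiset ℕ} (hsum : μ.sum = Fintype.card α)
    (hpos : ∀ i ∈ μ, 0 < i) : σ.partition.parts = μ ↔ σ.cycleType = μ.filter (2 ≤ ·) := by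
  refine ⟨fun h => h ▸ filter_parts_partition_eq_cycleType.symm, fun h => ?_⟩
  set ones := μ.filter (¬ 2 ≤ ·)
  have hones : ones = Multiset.replicate ones.card 1 :=
    Multiset.eq_replicate_card.mpr fun i hi => by
      obtain ⟨hiμ, hi2⟩ := Multiset.mem_filter.mp hi
      have := hpos i hiμ
      omega
  have hsplit : μ.filter (2 ≤ ·) + ones = μ := Multiset.filter_add_not _ μ
  have hcard : ones.card = Fintype.card α - σ.cycleType.sum := by
    have := congrArg Multiset.sum hsplit
    rw [Multiset.sum_add, hones, Multiset.sum_replicate, smul_eq_mul, mul_one, hsum, ← h] at this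
    omega
  rw [parts_partition, ← sum_cycleType, ← hsplit, ← h, ← hcard, ← hones]

theorem partition_inv (σ : Perm α) : σ⁻¹.partition = σ.partition :=
  partition_eq_of_isConj.mp (isConj_iff_cycleType_eq.mpr (cycleType_inv σ))

theorem partition_mul_comm (σ τ : Perm α) : (σ * τ).partition = (τ * σ).partition :=
  partition_eq_of_isConj.mp (isConj_iff.mpr ⟨τ, by group⟩)

section FullCycle

variable {c : Perm α} (hc : c.cycleType = {Fintype.card α})
include hc

theorem isCycle_of_cycleType_eq_card : c.IsCycle :=
  card_cycleType_eq_one.mp (by rw [hc, Multiset.card_singleton])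

theorem support_eq_univ_of_cycleType_eq_card : c.support = Finset.univ :=
  Finset.eq_univ_of_card _ (by rw [← sum_cycleType, hc, Multiset.sum_singleton])

theorem orderOf_eq_card_of_cycleType_eq_card : orderOf c = Fintype.card α := by
  rw [(isCycle_of_cycleType_eq_card hc).orderOf, support_eq_univ_of_cycleType_eq_card hc,
    Finset.card_univ]

theorem apply_ne_self_of_cycleType_eq_card (x : α) : c x ≠ x :=
  mem_support.mp (support_eq_univ_of_cycleType_eq_card hc ▸ Finset.mem_univ x)

theorem exists_pow_apply_eq_of_cycleType_eq_card (x y : α) :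
    ∃ m < Fintype.card α, (c ^ m) x = y := by
  obtain ⟨m, hm⟩ := (isCycle_of_cycleType_eq_card hc).exists_pow_eq
    (apply_ne_self_of_cycleType_eq_card hc x) (apply_ne_self_of_cycleType_eq_card hc y)
  have hpos : 0 < Fintype.card α := Fintype.card_pos_iff.mpr ⟨x⟩
  refine ⟨m % Fintype.card α, Nat.mod_lt _ hpos, ?_⟩
  rwa [← orderOf_eq_card_of_cycleType_eq_card hc, pow_mod_orderOf]

theorem eq_of_commute_of_apply_eq {g h : Perm α} (hg : Commute g c) (hh : Commute h c) {x : α}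
    (hx : g x = h x) : g = h := by
  ext y
  obtain ⟨m, -, rfl⟩ := exists_pow_apply_eq_of_cycleType_eq_card hc x y
  rw [← mul_apply, (hg.pow_right m).eq, mul_apply, hx, ← mul_apply, ← (hh.pow_right m).eq,
    mul_apply]

theorem pow_apply_eq_self_iff_card_dvd (x : α) (m : ℕ) :
    (c ^ m) x = x ↔ Fintype.card α ∣ m := by
  rw [← orderOf_eq_card_of_cycleType_eq_card hc, orderOf_dvd_iff_pow_eq_one]
  refine ⟨fun h => eq_of_commute_of_apply_eq hc (Commute.pow_left rfl m) (Commute.one_left c) h,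
    fun h => by rw [h, one_apply]⟩

theorem pow_apply_ne_self_of_pos_of_lt (x : α) {m : ℕ} (hm₀ : 0 < m) (hm : m < Fintype.card α) :
    (c ^ m) x ≠ x := fun h =>
  Nat.not_dvd_of_pos_of_lt hm₀ hm ((pow_apply_eq_self_iff_card_dvd hc x m).mp h)

theorem length_toList_of_cycleType_eq_card (x : α) : (toList c x).length = Fintype.card α := by
  rw [length_toList, (isCycle_of_cycleType_eq_card hc).cycleOf_eq
    (apply_ne_self_of_cycleType_eq_card hc x), support_eq_univ_of_cycleType_eq_card hc,
    Finset.card_univ]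

theorem swap_pow_mul_eq_formPerm_take_mul_formPerm_drop (x : α) {k : ℕ} (hk₀ : 0 < k)
    (hk : k < Fintype.card α) :
    swap x ((c ^ k) x) * c = ((toList c x).take k).formPerm * ((toList c x).drop k).formPerm := by
  have hlen := length_toList_of_cycleType_eq_card hc x
  set L := toList c x
  have hL : L.formPerm = c := by
    rw [formPerm_toList, (isCycle_of_cycleType_eq_card hc).cycleOf_eq
      (apply_ne_self_of_cycleType_eq_card hc x)]
  have htake : L.take k ≠ [] := List.ne_nil_of_length_pos (by rw [List.length_take]; omega)
  have hdrop : L.drop k ≠ [] := List.ne_nil_of_length_pos (by rw [List.length_drop]; omega)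
  have hsplit := List.formPerm_append_of_ne_nil htake hdrop
    (by rw [List.take_append_drop]; exact nodup_toList c x)
  rw [List.take_append_drop, hL, List.head_take, List.head_drop, List.head_eq_getElem,
    getElem_toList, getElem_toList, pow_zero, one_apply, mul_assoc] at hsplit
  conv_lhs => arg 2; rw [hsplit]
  exact swap_mul_self_mul _ _ _

theorem parts_partition_swap_pow_mul (x : α) {k : ℕ} (hk₀ : 0 < k) (hk : k < Fintype.card α) :
    (swap x ((c ^ k) x) * c).partition.parts = {k, Fintype.card α - k} := by
  have hnodup : ((toList c x).take k ++ (toList c x).drop k).Nodup := by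
    rw [List.take_append_drop]
    exact nodup_toList c x
  have hsum : ({k, Fintype.card α - k} : Multiset ℕ).sum = Fintype.card α := by
    simp only [Multiset.insert_eq_cons, Multiset.sum_cons, Multiset.sum_singleton]
    omega
  have hpos : ∀ i ∈ ({k, Fintype.card α - k} : Multiset ℕ), 0 < i := by
    simp only [Multiset.insert_eq_cons, Multiset.mem_cons, Multiset.mem_singleton,
      forall_eq_or_imp, forall_eq]
    omega
  rw [swap_pow_mul_eq_formPerm_take_mul_formPerm_drop hc x hk₀ hk, parts_partition_eq_iff hsum hpos,
    (List.disjoint_formPerm_of_disjoint (List.disjoint_of_nodup_append hnodup)).cycleType_mul,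
    List.cycleType_formPerm_of_nodup hnodup.of_append_left,
    List.cycleType_formPerm_of_nodup hnodup.of_append_right, List.length_take, List.length_drop,
    length_toList_of_cycleType_eq_card hc, min_eq_left hk.le, ← Multiset.filter_add,
    Multiset.singleton_add]
  rfl

end FullCycle

def fullCycleSwapPairs (α : Type*) [Fintype α] [DecidableEq α] (μ : Multiset ℕ) :
    Set (Perm α × Perm α) :=
  {p | p.1.cycleType = {Fintype.card α} ∧ p.2.IsSwap ∧ (p.2 * p.1).partition.parts = μ}

open ConjAct MulAction

theorem smul_mem_fullCycleSwapPairs {μ : Multiset ℕ} {p : Perm α × Perm α}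
    (hp : p ∈ fullCycleSwapPairs α μ) (g : ConjAct (Perm α)) : g • p ∈ fullCycleSwapPairs α μ := by
  obtain ⟨c, τ⟩ := p
  obtain ⟨hc, ⟨a, b, hab, rfl⟩, hμ⟩ := hp
  have hconj (σ : Perm α) : IsConj σ (g • σ) :=
    isConj_iff.mpr ⟨ofConjAct g, (ConjAct.smul_def g σ).symm⟩
  refine ⟨(isConj_iff_cycleType_eq.mp (hconj c)).symm.trans hc, ⟨ofConjAct g a, ofConjAct g b,
    (ofConjAct g).injective.ne hab, by rw [Prod.smul_snd, ConjAct.smul_def, swap_apply_apply]⟩, ?_⟩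
  rw [Prod.smul_fst, Prod.smul_snd, ← smul_mul', ← partition_eq_of_isConj.mp (hconj _)]
  exact hμ

section Orbit

variable {c : Perm α} (hc : c.cycleType = {Fintype.card α}) (x : α)
include hc

theorem exists_smul_mk_swap_pow_eq {c' τ : Perm α} (hc' : c'.cycleType = {Fintype.card α})
    (hτ : τ.IsSwap) : ∃ (g : ConjAct (Perm α)) (m : ℕ), 0 < m ∧ m < Fintype.card α ∧
      g • (c, swap x ((c ^ m) x)) = (c', τ) := by
  obtain ⟨h, rfl⟩ := isConj_iff.mp (isConj_iff_cycleType_eq.mpr (hc.trans hc'.symm))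
  obtain ⟨a, b, hab, rfl⟩ := hτ
  obtain ⟨j, -, hj⟩ := exists_pow_apply_eq_of_cycleType_eq_card hc x (h⁻¹ a)
  set g := h * c ^ j
  have hga : g x = a := by simp [g, mul_apply, hj]
  obtain ⟨m, hmn, hm⟩ := exists_pow_apply_eq_of_cycleType_eq_card hc x (g⁻¹ b)
  have hgb : g ((c ^ m) x) = b := by rw [hm, ← mul_apply, mul_inv_cancel, one_apply]
  refine ⟨toConjAct g, m, Nat.pos_of_ne_zero ?_, hmn, ?_⟩
  · rintro rfl
    exact hab (hga.symm.trans hgb)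
  · rw [Prod.smul_mk, toConjAct_smul, toConjAct_smul, ← swap_apply_apply, hga, hgb]
    simp only [g]
    congr 1
    group

variable {l₁ l₂ : ℕ} (hsum : l₁ + l₂ = Fintype.card α)
include hsum

theorem mk_swap_pow_mem_fullCycleSwapPairs_iff {m : ℕ} (hm₀ : 0 < m) (hm : m < Fintype.card α) :
    (c, swap x ((c ^ m) x)) ∈ fullCycleSwapPairs α {l₁, l₂} ↔ m = l₁ ∨ m = l₂ := by
  simp only [fullCycleSwapPairs, Set.mem_ofPred_eq, parts_partition_swap_pow_mul hc x hm₀ hm]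
  refine ⟨fun ⟨_, _, h⟩ => ?_, fun h =>
    ⟨hc, ⟨_, _, (pow_apply_ne_self_of_pos_of_lt hc x hm₀ hm).symm, rfl⟩, ?_⟩⟩
  · have : m ∈ ({l₁, l₂} : Multiset ℕ) := h ▸ Multiset.mem_cons_self _ _
    simpa using this
  · rcases h with rfl | rfl
    · rw [show Fintype.card α - m = l₂ by omega]
    · rw [show Fintype.card α - m = l₁ by omega, Multiset.pair_comm]

theorem toConjAct_pow_smul_mk_swap_pow :
    toConjAct (c ^ l₂) • (c, swap x ((c ^ l₁) x)) = (c, swap x ((c ^ l₂) x)) := by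
  have hcycle : (c ^ (l₂ + l₁)) x = x :=
    (pow_apply_eq_self_iff_card_dvd hc x _).mpr (by rw [add_comm, hsum])
  rw [Prod.smul_mk, toConjAct_smul, toConjAct_smul, ← swap_apply_apply, ← mul_apply, ← pow_add,
    hcycle, swap_comm, (Commute.self_pow c l₂).symm.eq, mul_inv_cancel_right]

theorem orbit_mk_swap_pow (h₁ : 0 < l₁) (h₂ : 0 < l₂) :
    orbit (ConjAct (Perm α)) (c, swap x ((c ^ l₁) x)) = fullCycleSwapPairs α {l₁, l₂} := by
  have hbase : (c, swap x ((c ^ l₁) x)) ∈ fullCycleSwapPairs α {l₁, l₂} :=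
    (mk_swap_pow_mem_fullCycleSwapPairs_iff hc x hsum h₁ (by omega)).mpr (Or.inl rfl)
  ext ⟨c', τ⟩
  refine ⟨fun ⟨g, hg⟩ => hg ▸ smul_mem_fullCycleSwapPairs hbase g, fun hp => ?_⟩
  obtain ⟨g, m, hm₀, hm, hgm⟩ := exists_smul_mk_swap_pow_eq hc x hp.1 hp.2.1
  have hmem : (c, swap x ((c ^ m) x)) ∈ fullCycleSwapPairs α {l₁, l₂} := by
    simpa [← hgm] using smul_mem_fullCycleSwapPairs hp g⁻¹
  rw [← hgm]
  rcases (mk_swap_pow_mem_fullCycleSwapPairs_iff hc x hsum hm₀ hm).mp hmem with rfl | rfl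
  · exact mem_orbit _ g
  · rw [← toConjAct_pow_smul_mk_swap_pow hc x hsum, smul_smul]
    exact mem_orbit _ _

theorem mem_stabilizer_mk_swap_pow_iff (h₁ : 0 < l₁) (h₂ : 0 < l₂) (u : Perm α) :
    toConjAct u ∈ stabilizer (ConjAct (Perm α)) (c, swap x ((c ^ l₁) x)) ↔
      u = 1 ∨ (l₁ = l₂ ∧ u = c ^ l₁) := by
  refine ⟨fun hu => ?_, ?_⟩
  · rw [mem_stabilizer_iff, Prod.smul_mk, toConjAct_smul, toConjAct_smul, Prod.mk.injEq,
      ← swap_apply_apply] at hu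
    obtain ⟨hcomm, hswap⟩ := hu
    -- `u` centralizes the full cycle `c`, so it is determined by `u x ∈ {x, c^l₁ x}`.
    have hu : Commute u c := mul_inv_eq_iff_eq_mul.mp hcomm
    have hux : u x = x ∨ u x = (c ^ l₁) x := by
      have : swap x ((c ^ l₁) x) (u x) ≠ u x := by
        rw [← hswap, swap_apply_left]
        exact u.injective.ne (pow_apply_ne_self_of_pos_of_lt hc x h₁ (by omega))
      exact (swap_apply_ne_self_iff.mp this).2
    rcases hux with hx | hx
    · exact Or.inl (eq_of_commute_of_apply_eq hc hu (Commute.one_left c) hx)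
    · have hu' : u = c ^ l₁ := eq_of_commute_of_apply_eq hc hu (Commute.self_pow c l₁).symm hx
      refine Or.inr ⟨?_, hu'⟩
      have hback : u ((c ^ l₁) x) = x := by
        have := Perm.congr_fun hswap (u ((c ^ l₁) x))
        rwa [swap_apply_right, hx, eq_comm, swap_apply_eq_iff, swap_apply_right] at this
      rw [hu', ← mul_apply, ← pow_add, pow_apply_eq_self_iff_card_dvd hc] at hback
      have := Nat.eq_of_dvd_of_lt_two_mul (by omega) hback (by omega)
      omega
  · rintro (rfl | ⟨rfl, rfl⟩)
    · rw [map_one]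
      exact one_mem _
    · exact toConjAct_pow_smul_mk_swap_pow hc x hsum

theorem card_stabilizer_mk_swap_pow (h₁ : 0 < l₁) (h₂ : 0 < l₂) :
    Nat.card (stabilizer (ConjAct (Perm α)) (c, swap x ((c ^ l₁) x))) =
      if l₁ = l₂ then 2 else 1 := by
  have hset : (stabilizer (ConjAct (Perm α)) (c, swap x ((c ^ l₁) x)) : Set (ConjAct (Perm α))) =
      if l₁ = l₂ then {1, toConjAct (c ^ l₁)} else {1} := by
    ext g
    obtain ⟨u, rfl⟩ := toConjAct.surjective g
    rw [SetLike.mem_coe, mem_stabilizer_mk_swap_pow_iff hc x hsum h₁ h₂]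
    split_ifs with h <;>
      simp only [h, true_and, false_and, or_false, Set.mem_insert_iff, Set.mem_singleton_iff,
        map_eq_one_iff _ toConjAct.injective, toConjAct.injective.eq_iff]
  rw [← SetLike.coe_sort_coe, Nat.card_coe_set_eq, hset]
  split_ifs with h
  · refine Set.ncard_pair fun h1 => pow_apply_ne_self_of_pos_of_lt hc x h₁ (by omega) ?_
    rw [(map_eq_one_iff _ toConjAct.injective).mp h1.symm, one_apply]
  · exact Set.ncard_singleton 1

end Orbit

theorem card_fullCycleSwapPairs_mul {l₁ l₂ : ℕ} (h₁ : 0 < l₁) (h₂ : 0 < l₂)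
    (hsum : l₁ + l₂ = Fintype.card α) :
    Nat.card (fullCycleSwapPairs α {l₁, l₂}) * (if l₁ = l₂ then 2 else 1) =
      (Fintype.card α).factorial := by
  obtain ⟨c, hc⟩ := (exists_with_cycleType_iff α (m := {Fintype.card α})).mpr
    ⟨(Multiset.sum_singleton _).le, fun a ha => by rw [Multiset.mem_singleton.mp ha]; omega⟩
  obtain ⟨x⟩ : Nonempty α := Fintype.card_pos_iff.mp (by omega)
  rw [← orbit_mk_swap_pow hc x hsum h₁ h₂, ← card_stabilizer_mk_swap_pow hc x hsum h₁ h₂,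
    ← Nat.card_prod, Nat.card_congr (orbitProdStabilizerEquivGroup _ _),
    Nat.card_congr ofConjAct.toEquiv, Nat.card_perm, Nat.card_eq_fintype_card]

end Equiv.Perm

section Monodromy

variable {d : ℕ}

theorem fullCycleType_eq_parts_partition (σ : Perm (Fin d)) :
    fullCycleType σ = σ.partition.parts := by
  rw [fullCycleType, parts_partition, sum_cycleType, Fintype.card_fin]

theorem fullCycleType_eq_singleton_iff (hd : 2 ≤ d) (σ : Perm (Fin d)) :
    fullCycleType σ = {d} ↔ σ.cycleType = {Fintype.card (Fin d)} := by
  rw [fullCycleType_eq_parts_partition,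
    parts_partition_eq_iff (by simp) fun a ha => by rw [Multiset.mem_singleton.mp ha]; omega,
    Multiset.filter_singleton, if_pos hd, Fintype.card_fin]

theorem fullCycleType_eq_transposition_iff (hd : 2 ≤ d) (σ : Perm (Fin d)) :
    fullCycleType σ = {2} + Multiset.replicate (d - 2) 1 ↔ σ.IsSwap := by
  have hsum : ({2} + Multiset.replicate (d - 2) 1 : Multiset ℕ).sum = Fintype.card (Fin d) := by
    simp only [Multiset.sum_add, Multiset.sum_singleton, Multiset.sum_replicate, smul_eq_mul,
      mul_one, Fintype.card_fin]
    omega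
  have hpos : ∀ a ∈ ({2} + Multiset.replicate (d - 2) 1 : Multiset ℕ), 0 < a := by
    intro a ha
    simp only [Multiset.mem_add, Multiset.mem_singleton, Multiset.mem_replicate] at ha
    omega
  have hones : (Multiset.replicate (d - 2) 1).filter (2 ≤ ·) = 0 :=
    Multiset.filter_eq_nil.mpr fun a ha => by rw [Multiset.eq_of_mem_replicate ha]; omega
  rw [fullCycleType_eq_parts_partition, isSwap_iff_cycleType, parts_partition_eq_iff hsum hpos,
    Multiset.filter_add, hones, add_zero, Multiset.filter_singleton, if_pos le_rfl]

theorem prod_ofFn_eq_one_iff {G : Type*} [Group G] (σ : Fin 3 → G) :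
    (List.ofFn σ).prod = 1 ↔ σ 0 = (σ 1 * σ 2)⁻¹ := by
  rw [eq_inv_iff_mul_eq_one]
  simp [List.ofFn_succ]

theorem isTransitiveTuple_of_cycleType_eq_card {n : ℕ} {σ : Fin n → Perm (Fin d)} {i : Fin n}
    (hσ : (σ i).cycleType = {Fintype.card (Fin d)}) : IsTransitiveTuple σ := by
  intro x y
  obtain ⟨m, -, hm⟩ := exists_pow_apply_eq_of_cycleType_eq_card hσ x y
  exact ⟨σ i ^ m, Subgroup.pow_mem _ (Subgroup.subset_closure (Set.mem_range_self i)) m, hm⟩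

def monodromyEquivFullCycleSwapPairs (hd : 2 ≤ d) (μ : Multiset ℕ) :
    {σ : Fin 3 → Perm (Fin d) //
      (∀ i, fullCycleType (σ i) = ![μ, {d}, {2} + Multiset.replicate (d - 2) 1] i) ∧
        (List.ofFn σ).prod = 1 ∧ IsTransitiveTuple σ} ≃ fullCycleSwapPairs (Fin d) μ where
  toFun σ := ⟨(σ.1 1, σ.1 2), by
    obtain ⟨hμ, hprod, -⟩ := σ.2
    refine ⟨(fullCycleType_eq_singleton_iff hd _).mp (hμ 1),
      (fullCycleType_eq_transposition_iff hd _).mp (hμ 2), ?_⟩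
    rw [← partition_mul_comm, ← partition_inv, ← (prod_ofFn_eq_one_iff _).mp hprod,
      ← fullCycleType_eq_parts_partition]
    exact hμ 0⟩
  invFun p := ⟨![(p.1.1 * p.1.2)⁻¹, p.1.1, p.1.2], by
    obtain ⟨hc, hτ, hμ⟩ := p.2
    refine ⟨fun i => ?_, (prod_ofFn_eq_one_iff _).mpr rfl,
      isTransitiveTuple_of_cycleType_eq_card (i := 1) hc⟩
    fin_cases i
    · show fullCycleType (p.1.1 * p.1.2)⁻¹ = μ
      rw [fullCycleType_eq_parts_partition, partition_inv, partition_mul_comm]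
      exact hμ
    · exact (fullCycleType_eq_singleton_iff hd _).mpr hc
    · exact (fullCycleType_eq_transposition_iff hd _).mpr hτ⟩
  left_inv σ := by
    obtain ⟨-, hprod, -⟩ := σ.2
    ext1
    funext i
    fin_cases i
    exacts [((prod_ofFn_eq_one_iff _).mp hprod).symm, rfl, rfl]
  right_inv _ := rfl

end Monodromy

/-- If `μ(p₁) = (λ₁, λ₂)`, `μ(p₂) = (d)` and `μ(p₃) = (2,1,…,1)`, then
`H^d_{S²}(P, μ) = 1/|Aut(μ(p₁))|`, where `|Aut(μ(p₁))| = 2` if `λ₁ = λ₂` and `1` otherwise. -/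
theorem hurwitz_three_points (d l₁ l₂ : ℕ) (h₁ : 1 ≤ l₁) (h₂ : 1 ≤ l₂)
    (hsum : l₁ + l₂ = d) :
    sphereHurwitz d 3
      ![ (l₁ ::ₘ {l₂} : Multiset ℕ), ({d} : Multiset ℕ),
         (({2} : Multiset ℕ) + Multiset.replicate (d - 2) 1) ]
      = 1 / (if l₁ = l₂ then 2 else 1) := by
  have hcount := card_fullCycleSwapPairs_mul (α := Fin d) h₁ h₂ (by rw [Fintype.card_fin, hsum])
  rw [Fintype.card_fin] at hcount
  rw [sphereHurwitz, Nat.card_congr (monodromyEquivFullCycleSwapPairs (by omega) _),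
    div_eq_div_iff (by positivity) (by split_ifs <;> norm_num), one_mul]
  exact_mod_cast hcount
end

section
/- In terms of permutations: for a fixed unordered partition (λ₁, λ₂) of d (so λ₁ + λ₂ = d), the number of pairs (σ, τ) with σ ∈ 𝔖_d a d-cycle and τ ∈ 𝔖_d a transposition such that στ has cycle type (λ₁, λ₂), divided by d!, equals 1/|Aut((λ₁, λ₂))|. -/
open Equiv

namespace HurwitzAux

open Equiv.Perm

open Fin.NatCast

variable {n : ℕ}

lemma pair_aux (a b : ℕ) : ({a} : Multiset ℕ) + {b} = {a, b} := by
  rw [Multiset.insert_eq_cons, Multiset.singleton_add]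

lemma val_c_pow (m : ℕ) : ∀ x : Fin (n + 2),
    ((finRotate (n + 2) ^ m) x).val = (x.val + m) % (n + 2) := by
  induction m with
  | zero => intro x; simpa using (Nat.mod_eq_of_lt x.isLt).symm
  | succ k ih =>
    intro x
    rw [pow_succ, Perm.mul_apply, finRotate_succ_apply, ih (x + 1), Fin.val_add, Fin.val_one,
      Nat.mod_add_mod]
    congr 1
    omega

lemma c_pow_apply (m : ℕ) (x : Fin (n + 2)) :
    (finRotate (n + 2) ^ m) x = x + (m : Fin (n + 2)) := by
  apply Fin.val_injective
  rw [val_c_pow, Fin.val_add, Fin.val_natCast, Nat.add_mod_mod]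

lemma c_pow_apply_zero (m : ℕ) :
    (finRotate (n + 2) ^ m) (0 : Fin (n + 2)) = (m : Fin (n + 2)) := by
  rw [c_pow_apply, zero_add]

lemma eq_c_pow_of_commute {k : Perm (Fin (n + 2))}
    (h : k * finRotate (n + 2) = finRotate (n + 2) * k) :
    k = finRotate (n + 2) ^ (k 0).val := by
  have key : ∀ v : ℕ, ∀ hv : v < n + 2, (k ⟨v, hv⟩).val = ((k 0).val + v) % (n + 2) := by
    intro v
    induction v with
    | zero =>
      intro hv
      show (k 0).val = ((k 0).val + 0) % (n + 2)
      simp [Nat.mod_eq_of_lt (k 0).isLt]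
    | succ w ih =>
      intro hv
      have hw : w < n + 2 := by omega
      have step : (⟨w + 1, hv⟩ : Fin (n + 2)) = finRotate (n + 2) ⟨w, hw⟩ := by
        apply Fin.val_injective
        rw [finRotate_succ_apply, Fin.val_add, Fin.val_one]
        exact (Nat.mod_eq_of_lt hv).symm
      rw [step, ← Perm.mul_apply, h, Perm.mul_apply, finRotate_succ_apply,
        Fin.val_add, Fin.val_one, ih hw, Nat.mod_add_mod]
      congr 1
  refine Equiv.ext fun x => Fin.val_injective ?_
  rw [val_c_pow]
  have hx := key x.val x.isLt
  rw [Fin.eta] at hx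
  rw [hx]
  congr 1
  omega

lemma swap_eq_swap {α : Type*} [DecidableEq α] {a b x y : α} (hab : a ≠ b)
    (h : Equiv.swap a b = Equiv.swap x y) : (a = x ∧ b = y) ∨ (a = y ∧ b = x) := by
  have h1 : Equiv.swap x y a = b := by rw [← h, swap_apply_left]
  rcases eq_or_ne a x with rfl | hax
  · rw [swap_apply_left] at h1
    exact Or.inl ⟨rfl, h1.symm⟩
  rcases eq_or_ne a y with rfl | hay
  · rw [swap_apply_right] at h1
    exact Or.inr ⟨rfl, h1.symm⟩
  · rw [swap_apply_of_ne_of_ne hax hay] at h1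
    exact absurd h1 hab

lemma fullCycleType_conj {d : ℕ} (g σ : Perm (Fin d)) :
    fullCycleType (g * σ * g⁻¹) = fullCycleType σ := by
  simp only [fullCycleType, cycleType_conj]

lemma sum_cycleType_le {d : ℕ} (σ : Perm (Fin d)) : σ.cycleType.sum ≤ d := by
  rw [Equiv.Perm.sum_cycleType]
  simpa using Finset.card_le_univ σ.support

lemma fullCycleType_eq_single_iff {d : ℕ} (hd : 2 ≤ d) {σ : Perm (Fin d)} :
    fullCycleType σ = {d} ↔ σ.cycleType = {d} := by
  constructor
  · intro h
    have hs := sum_cycleType_le σ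
    have hcard := congrArg Multiset.card h
    simp only [fullCycleType, Multiset.card_add, Multiset.card_replicate,
      Multiset.card_singleton] at hcard
    rcases Nat.eq_zero_or_pos (Multiset.card σ.cycleType) with h0 | h1
    · exfalso
      rw [Multiset.card_eq_zero] at h0
      have hsum0 : σ.cycleType.sum = 0 := by rw [h0]; simp
      omega
    · have hrep : d - σ.cycleType.sum = 0 := by omega
      rwa [fullCycleType, hrep, Multiset.replicate_zero, add_zero] at h
  · intro h
    rw [fullCycleType, h]
    simp

lemma fullCycleType_swap_iff {d : ℕ} {σ : Perm (Fin d)} :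
    fullCycleType σ = {2} + Multiset.replicate (d - 2) 1 ↔ σ.cycleType = {2} := by
  constructor
  · intro h
    have hcount1 : σ.cycleType.count 1 = 0 := by
      rw [Multiset.count_eq_zero]
      intro hmem
      have := Equiv.Perm.two_le_of_mem_cycleType hmem
      omega
    have hrep : d - σ.cycleType.sum = d - 2 := by
      have h1 := congrArg (Multiset.count 1) h
      rw [fullCycleType, Multiset.count_add, Multiset.count_add, Multiset.count_replicate,
        Multiset.count_replicate] at h1
      simpa [hcount1, Multiset.count_singleton] using h1
    refine Multiset.ext.mpr fun m => ?_
    have hm := congrArg (Multiset.count m) h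
    rw [fullCycleType, Multiset.count_add, Multiset.count_add, Multiset.count_replicate,
      Multiset.count_replicate, hrep] at hm
    by_cases h1 : m = 1
    · subst h1
      rw [hcount1]
      simp [Multiset.count_singleton]
    · simpa [h1] using hm
  · intro h
    rw [fullCycleType, h]
    norm_num

lemma cycleType_eq_two_iff {d : ℕ} {σ : Perm (Fin d)} : σ.cycleType = {2} ↔ σ.IsSwap := by
  constructor
  · intro h
    rw [← Equiv.Perm.card_support_eq_two]
    have := Equiv.Perm.sum_cycleType σ
    rw [h] at this
    simpa using this.symm
  · rintro ⟨x, y, hxy, rfl⟩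
    rw [(Equiv.Perm.isCycle_swap hxy).cycleType, Equiv.Perm.card_support_swap hxy]

lemma key1 (j : ℕ) (hj1 : 1 ≤ j) (hj2 : j ≤ n + 1) (hjlt : j < n + 2) :
    fullCycleType (finRotate (n + 2) * Equiv.swap 0 ⟨j, hjlt⟩) = {j, n + 2 - j} := by
  set c : Perm (Fin (n + 2)) := finRotate (n + 2) with hc
  have hi₁ : j - 1 < n + 2 := by omega
  have hi₂ : n + 1 - j < n + 2 := by omega
  set ρ₁ := Fin.cycleRange (⟨j - 1, hi₁⟩ : Fin (n + 2)) with hρ₁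
  set ρ₂ := Fin.cycleRange (⟨n + 1 - j, hi₂⟩ : Fin (n + 2)) with hρ₂
  set σ₁ := c ^ 1 * ρ₁ * (c ^ 1)⁻¹ with hσ₁
  set σ₂ := c ^ (j + 1) * ρ₂ * (c ^ (j + 1))⁻¹ with hσ₂
  -- inverse computation at the level of values
  have hinv : ∀ (m : ℕ) (x : Fin (n + 2)), m ≤ n + 2 →
      ((c ^ m)⁻¹ x).val = (x.val + (n + 2) - m) % (n + 2) := by
    intro m x hm
    set y := (c ^ m)⁻¹ x with hy
    have hxy : x = (c ^ m) y := by rw [hy, Equiv.Perm.coe_inv, Equiv.apply_symm_apply]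
    rw [hxy, val_c_pow]
    have e : (y.val + m) % (n + 2) + (n + 2) - m = (y.val + m) % (n + 2) + (n + 2 - m) := by
      omega
    rw [e, Nat.mod_add_mod]
    have e2 : y.val + m + (n + 2 - m) = y.val + (n + 2) := by omega
    rw [e2, Nat.add_mod_right, Nat.mod_eq_of_lt y.isLt]
  -- value computation for σ₂
  have hv2 : ∀ x : Fin (n + 2), (σ₂ x).val =
      if j + 1 ≤ x.val then (x.val + 1) % (n + 2)
      else if x.val = 0 then (j + 1) % (n + 2)
      else x.val := by
    intro x
    have hx := x.isLt
    rw [hσ₂, Perm.mul_apply, Perm.mul_apply]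
    by_cases hc1 : j + 1 ≤ x.val
    · rw [if_pos hc1]
      have hu : ((c ^ (j + 1))⁻¹ x).val = x.val - (j + 1) := by
        rw [hinv (j + 1) x (by omega)]
        have e : x.val + (n + 2) - (j + 1) = (x.val - (j + 1)) + (n + 2) := by omega
        rw [e, Nat.add_mod_right, Nat.mod_eq_of_lt (by omega)]
      have hlt : (c ^ (j + 1))⁻¹ x < (⟨n + 1 - j, hi₂⟩ : Fin (n + 2)) := by
        rw [Fin.lt_def, hu]
        show x.val - (j + 1) < n + 1 - j
        omega
      rw [Fin.cycleRange_of_lt hlt, val_c_pow, Fin.val_add, Fin.val_one, Nat.mod_add_mod,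
        hu]
      have e : x.val - (j + 1) + 1 + (j + 1) = x.val + 1 := by omega
      rw [e]
    · rw [if_neg hc1]
      by_cases hc0 : x.val = 0
      · rw [if_pos hc0]
        have hu : ((c ^ (j + 1))⁻¹ x).val = n + 1 - j := by
          rw [hinv (j + 1) x (by omega), hc0, Nat.mod_eq_of_lt (by omega)]
          omega
        have heq : (c ^ (j + 1))⁻¹ x = (⟨n + 1 - j, hi₂⟩ : Fin (n + 2)) :=
          Fin.val_injective (by rw [hu])
        rw [heq, Fin.cycleRange_self, val_c_pow, Fin.val_zero, Nat.zero_add]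
      · rw [if_neg hc0]
        have hu : ((c ^ (j + 1))⁻¹ x).val = x.val + n + 1 - j := by
          rw [hinv (j + 1) x (by omega), Nat.mod_eq_of_lt (by omega)]
          omega
        have hgt : (⟨n + 1 - j, hi₂⟩ : Fin (n + 2)) < (c ^ (j + 1))⁻¹ x := by
          rw [Fin.lt_def, hu]
          show n + 1 - j < x.val + n + 1 - j
          omega
        rw [Fin.cycleRange_of_gt hgt, val_c_pow, hu]
        have e : x.val + n + 1 - j + (j + 1) = x.val + (n + 2) := by omega
        rw [e, Nat.add_mod_right, Nat.mod_eq_of_lt hx]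
  -- value computation for σ₁
  have hv1 : ∀ x : Fin (n + 2), (σ₁ x).val =
      if 1 ≤ x.val ∧ x.val < j then x.val + 1
      else if x.val = j then 1
      else x.val := by
    intro x
    have hx := x.isLt
    rw [hσ₁, Perm.mul_apply, Perm.mul_apply]
    by_cases hc0 : x.val = 0
    · have hu : ((c ^ 1)⁻¹ x).val = n + 1 := by
        rw [hinv 1 x (by omega), hc0, Nat.mod_eq_of_lt (by omega)]
        omega
      have hgt : (⟨j - 1, hi₁⟩ : Fin (n + 2)) < (c ^ 1)⁻¹ x := by
        rw [Fin.lt_def, hu]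
        show j - 1 < n + 1
        omega
      rw [Fin.cycleRange_of_gt hgt, val_c_pow, hu, if_neg (by omega), if_neg (by omega), hc0,
        show n + 1 + 1 = n + 2 from by omega, Nat.mod_self]
    · have huval : ((c ^ 1)⁻¹ x).val = x.val - 1 := by
        rw [hinv 1 x (by omega)]
        have e : x.val + (n + 2) - 1 = (x.val - 1) + (n + 2) := by omega
        rw [e, Nat.add_mod_right, Nat.mod_eq_of_lt (by omega)]
      by_cases hcj : x.val < j
      · rw [if_pos ⟨by omega, hcj⟩]
        have hlt : (c ^ 1)⁻¹ x < (⟨j - 1, hi₁⟩ : Fin (n + 2)) := by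
          rw [Fin.lt_def, huval]
          show x.val - 1 < j - 1
          omega
        rw [Fin.cycleRange_of_lt hlt, val_c_pow, Fin.val_add, Fin.val_one, Nat.mod_add_mod,
          huval]
        have e : x.val - 1 + 1 + 1 = x.val + 1 := by omega
        rw [e, Nat.mod_eq_of_lt (by omega)]
      · rw [if_neg (by omega)]
        by_cases hcej : x.val = j
        · rw [if_pos hcej]
          have heq : (c ^ 1)⁻¹ x = (⟨j - 1, hi₁⟩ : Fin (n + 2)) :=
            Fin.val_injective (by rw [huval, hcej])
          rw [heq, Fin.cycleRange_self, val_c_pow, Fin.val_zero, Nat.zero_add,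
            Nat.mod_eq_of_lt (by omega)]
        · rw [if_neg hcej]
          have hgt : (⟨j - 1, hi₁⟩ : Fin (n + 2)) < (c ^ 1)⁻¹ x := by
            rw [Fin.lt_def, huval]
            show j - 1 < x.val - 1
            omega
          rw [Fin.cycleRange_of_gt hgt, val_c_pow, huval]
          have e : x.val - 1 + 1 = x.val := by omega
          rw [e, Nat.mod_eq_of_lt hx]
  -- value computation for the product
  have hπ : ∀ x : Fin (n + 2), ((c * Equiv.swap (0 : Fin (n + 2)) ⟨j, hjlt⟩) x).val =
      if x.val = 0 then (j + 1) % (n + 2)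
      else if x.val = j then 1
      else (x.val + 1) % (n + 2) := by
    intro x
    rw [Perm.mul_apply]
    by_cases hc0 : x.val = 0
    · have hx0 : x = 0 := by
        rw [Fin.ext_iff, Fin.val_zero]
        exact hc0
      subst hx0
      rw [swap_apply_left]
      simp only [Fin.val_zero, if_pos]
      rw [hc, finRotate_succ_apply, Fin.val_add, Fin.val_one]
    · rw [if_neg hc0]
      by_cases hcj : x.val = j
      · have hxJ : x = (⟨j, hjlt⟩ : Fin (n + 2)) := Fin.val_injective hcj
        rw [hxJ, swap_apply_right,
          if_pos (show (⟨j, hjlt⟩ : Fin (n + 2)).val = j from rfl), hc, finRotate_succ_apply,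
          Fin.val_add, Fin.val_zero, Fin.val_one, Nat.zero_add, Nat.mod_eq_of_lt (by omega)]
      · rw [if_neg hcj, swap_apply_of_ne_of_ne
          (fun h => hc0 (by rw [h, Fin.val_zero])) (fun h => hcj (by rw [h])),
          hc, finRotate_succ_apply, Fin.val_add, Fin.val_one]
  -- mod helpers
  have e1 : ∀ v : ℕ, v < n + 2 → (v + 1) % (n + 2) = if v = n + 1 then 0 else v + 1 := by
    intro v hv
    split_ifs with h
    · rw [h, Nat.mod_self]
    · rw [Nat.mod_eq_of_lt (by omega)]
  -- product identity
  have hprod : c * Equiv.swap 0 ⟨j, hjlt⟩ = σ₁ * σ₂ := by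
    refine Equiv.ext fun x => Fin.val_injective ?_
    have hx := x.isLt
    rw [hπ x, Perm.mul_apply, hv1 (σ₂ x), hv2 x, e1 j (by omega), e1 x.val hx]
    split_ifs <;> omega
  -- disjointness
  have hdisj : σ₁.Disjoint σ₂ := by
    intro x
    by_cases h : 1 ≤ x.val ∧ x.val ≤ j
    · right
      apply Fin.val_injective
      rw [hv2 x, if_neg (by omega), if_neg (by omega)]
    · left
      apply Fin.val_injective
      rw [hv1 x, if_neg (by omega), if_neg (by omega)]
  -- assembly
  rw [fullCycleType, hprod]
  by_cases hA : 2 ≤ j ∧ j ≤ n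
  · have hcy1 : σ₁.cycleType = {j} := by
      rw [hσ₁, cycleType_conj, hρ₁, Fin.cycleType_cycleRange (by
        intro h
        have h' := congrArg Fin.val h
        rw [Fin.val_zero] at h'
        have : j - 1 = 0 := h'
        omega)]
      show ({j - 1 + 1} : Multiset ℕ) = {j}
      have he : j - 1 + 1 = j := by omega
      rw [he]
    have hcy2 : σ₂.cycleType = {n + 2 - j} := by
      rw [hσ₂, cycleType_conj, hρ₂, Fin.cycleType_cycleRange (by
        intro h
        have h' := congrArg Fin.val h
        rw [Fin.val_zero] at h'
        have : n + 1 - j = 0 := h'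
        omega)]
      show ({n + 1 - j + 1} : Multiset ℕ) = {n + 2 - j}
      have he : n + 1 - j + 1 = n + 2 - j := by omega
      rw [he]
    rw [hdisj.cycleType_mul, hcy1, hcy2]
    have hsum : ({j} + {n + 2 - j} : Multiset ℕ).sum = n + 2 := by
      rw [Multiset.sum_add, Multiset.sum_singleton, Multiset.sum_singleton]
      omega
    rw [hsum, Nat.sub_self, Multiset.replicate_zero, add_zero, pair_aux]
  · by_cases hB : j = 1
    · subst hB
      have hone : σ₁ = 1 := by
        rw [hσ₁, hρ₁]
        have hz : (⟨1 - 1, hi₁⟩ : Fin (n + 2)) = ⟨0, by omega⟩ := rfl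
        rw [hz, Fin.cycleRange_mk_zero (by omega)]
        group
      rcases Nat.eq_zero_or_pos n with hn0 | hn1
      · subst hn0
        have htwo : σ₂ = 1 := by
          rw [hσ₂, hρ₂]
          have hz : (⟨0 + 1 - 1, hi₂⟩ : Fin (0 + 2)) = ⟨0, by omega⟩ := rfl
          rw [hz, Fin.cycleRange_mk_zero (by omega)]
          group
        rw [hone, htwo, one_mul, cycleType_one]
        decide
      · have hcy2 : σ₂.cycleType = {n + 1} := by
          rw [hσ₂, cycleType_conj, hρ₂, Fin.cycleType_cycleRange (by
            intro h
            have h' := congrArg Fin.val h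
            rw [Fin.val_zero] at h'
            have : n + 1 - 1 = 0 := h'
            omega)]
          show ({n + 1 - 1 + 1} : Multiset ℕ) = {n + 1}
          have he : n + 1 - 1 + 1 = n + 1 := by omega
          rw [he]
        rw [hone, one_mul, hcy2]
        have hs : n + 2 - ({n + 1} : Multiset ℕ).sum = 1 := by
          rw [Multiset.sum_singleton]
          omega
        rw [hs, Multiset.replicate_one]
        have : n + 2 - 1 = n + 1 := by omega
        rw [this, add_comm, pair_aux]
    · have hj : j = n + 1 := by omega
      have hn1 : 1 ≤ n := by omega
      have htwo : σ₂ = 1 := by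
        rw [hσ₂, hρ₂]
        have hz : (⟨n + 1 - j, hi₂⟩ : Fin (n + 2)) = ⟨0, by omega⟩ :=
          Fin.val_injective (by show n + 1 - j = 0; omega)
        rw [hz, Fin.cycleRange_mk_zero (by omega)]
        group
      have hcy1 : σ₁.cycleType = {j} := by
        rw [hσ₁, cycleType_conj, hρ₁, Fin.cycleType_cycleRange (by
          intro h
          have h' := congrArg Fin.val h
          rw [Fin.val_zero] at h'
          have : j - 1 = 0 := h'
          omega)]
        show ({j - 1 + 1} : Multiset ℕ) = {j}
        have he : j - 1 + 1 = j := by omega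
        rw [he]
      rw [htwo, mul_one, hcy1]
      have hs : n + 2 - ({j} : Multiset ℕ).sum = 1 := by
        rw [Multiset.sum_singleton]
        omega
      rw [hs, Multiset.replicate_one]
      have : n + 2 - j = 1 := by omega
      rw [this, pair_aux]

lemma key2 {a b : Fin (n + 2)} (hab : a ≠ b) :
    fullCycleType (finRotate (n + 2) * Equiv.swap a b)
      = {(b - a).val, n + 2 - (b - a).val} := by
  set c : Perm (Fin (n + 2)) := finRotate (n + 2) with hc
  have hba : b - a ≠ 0 := sub_ne_zero.mpr hab.symm
  have hval1 : 1 ≤ (b - a).val := by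
    rcases Nat.eq_zero_or_pos (b - a).val with h0 | h1
    · exact absurd (Fin.val_injective (by rw [h0, Fin.val_zero]) : b - a = 0) hba
    · exact h1
  have h1 : c ^ a.val * Equiv.swap 0 (b - a) * (c ^ a.val)⁻¹ = Equiv.swap a b := by
    rw [← swap_apply_apply, c_pow_apply, c_pow_apply, zero_add, Fin.cast_val_eq_self]
    congr 1
    exact sub_add_cancel b a
  have hconj : c * Equiv.swap a b
      = c ^ a.val * (c * Equiv.swap 0 (b - a)) * (c ^ a.val)⁻¹ := by
    rw [← h1]
    have hcomm : c ^ a.val * c = c * c ^ a.val := by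
      rw [← pow_succ, pow_succ']
    calc c * (c ^ a.val * Equiv.swap 0 (b - a) * (c ^ a.val)⁻¹)
        = c * c ^ a.val * Equiv.swap 0 (b - a) * (c ^ a.val)⁻¹ := by
          simp only [mul_assoc]
      _ = c ^ a.val * c * Equiv.swap 0 (b - a) * (c ^ a.val)⁻¹ := by rw [hcomm]
      _ = c ^ a.val * (c * Equiv.swap 0 (b - a)) * (c ^ a.val)⁻¹ := by
          simp only [mul_assoc]
  have heta : (⟨(b - a).val, (b - a).isLt⟩ : Fin (n + 2)) = b - a := Fin.eta _ _
  rw [hconj, fullCycleType_conj, ← heta,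
    key1 (b - a).val hval1 (by have := (b - a).isLt; omega) (b - a).isLt]


lemma main_count (n l₁ l₂ : ℕ) (h₁ : 1 ≤ l₁) (h₂ : 1 ≤ l₂) (hsum : l₁ + l₂ = n + 2) :
    Nat.card {p : Perm (Fin (n + 2)) × Perm (Fin (n + 2)) //
        fullCycleType p.1 = ({n + 2} : Multiset ℕ) ∧
        fullCycleType p.2 = (({2} : Multiset ℕ) + Multiset.replicate (n + 2 - 2) 1) ∧
        fullCycleType (p.1 * p.2) = (l₁ ::ₘ {l₂} : Multiset ℕ)} *
      (if l₁ = l₂ then 2 else 1) = Nat.factorial (n + 2) := by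
  classical
  set T := {p : Perm (Fin (n + 2)) × Perm (Fin (n + 2)) //
        fullCycleType p.1 = ({n + 2} : Multiset ℕ) ∧
        fullCycleType p.2 = (({2} : Multiset ℕ) + Multiset.replicate (n + 2 - 2) 1) ∧
        fullCycleType (p.1 * p.2) = (l₁ ::ₘ {l₂} : Multiset ℕ)} with hT
  set c : Perm (Fin (n + 2)) := finRotate (n + 2) with hc
  have hl₁ : l₁ < n + 2 := by omega
  have hl₂ : l₂ < n + 2 := by omega
  set L : Fin (n + 2) := ⟨l₁, hl₁⟩ with hL
  have hL0 : L ≠ 0 := by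
    intro h
    have h' := congrArg Fin.val h
    rw [hL, Fin.val_zero] at h'
    exact absurd (show l₁ = 0 from h') (by omega)
  have hceq : ∀ m : ℕ, c ^ m * c * (c ^ m)⁻¹ = c := by
    intro m
    rw [← pow_succ, pow_succ', mul_inv_cancel_right]
  have hmemP : ∀ g : Perm (Fin (n + 2)),
      fullCycleType (g * c * g⁻¹) = ({n + 2} : Multiset ℕ) ∧
      fullCycleType (g * Equiv.swap 0 L * g⁻¹)
        = (({2} : Multiset ℕ) + Multiset.replicate (n + 2 - 2) 1) ∧
      fullCycleType ((g * c * g⁻¹) * (g * Equiv.swap 0 L * g⁻¹))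
        = (l₁ ::ₘ {l₂} : Multiset ℕ) := by
    intro g
    refine ⟨?_, ?_, ?_⟩
    · rw [fullCycleType_conj, hc]
      exact (fullCycleType_eq_single_iff (by omega)).mpr cycleType_finRotate
    · rw [fullCycleType_conj]
      exact fullCycleType_swap_iff.mpr (cycleType_eq_two_iff.mpr ⟨0, L, Ne.symm hL0, rfl⟩)
    · have hgrp : (g * c * g⁻¹) * (g * Equiv.swap 0 L * g⁻¹)
          = g * (c * Equiv.swap 0 L) * g⁻¹ := by group
      rw [hgrp, fullCycleType_conj, hc, hL, key1 l₁ h₁ (by omega) hl₁,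
        show n + 2 - l₁ = l₂ from by omega, Multiset.insert_eq_cons]
  set f : Perm (Fin (n + 2)) → T :=
    fun g => ⟨(g * c * g⁻¹, g * Equiv.swap 0 L * g⁻¹), hmemP g⟩ with hf
  -- surjectivity
  have hsurj : ∀ s : T, ∃ g : Perm (Fin (n + 2)), f g = s := by
    rintro ⟨⟨σ, τ⟩, h1, h2, h3⟩
    dsimp only at h1 h2 h3
    have hcycσ : σ.cycleType = {n + 2} := (fullCycleType_eq_single_iff (by omega)).mp h1
    have hconj : IsConj c σ := Equiv.Perm.isConj_iff_cycleType_eq.mpr (by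
      rw [hcycσ, hc, cycleType_finRotate])
    obtain ⟨h, hh⟩ := isConj_iff.mp hconj
    obtain ⟨a, b, hab, rfl⟩ := cycleType_eq_two_iff.mp (fullCycleType_swap_iff.mp h2)
    have hab' : h⁻¹ a ≠ h⁻¹ b := fun e => hab (h⁻¹.injective e)
    have hsw : Equiv.swap (h⁻¹ a) (h⁻¹ b) = h⁻¹ * Equiv.swap a b * h := by
      have := swap_apply_apply h⁻¹ a b
      rwa [inv_inv] at this
    have hsplit : σ * Equiv.swap a b = h * (c * Equiv.swap (h⁻¹ a) (h⁻¹ b)) * h⁻¹ := by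
      rw [hsw, ← hh]
      group
    rw [hsplit, fullCycleType_conj, hc, key2 hab'] at h3
    have hmemq : (h⁻¹ b - h⁻¹ a).val = l₁ ∨ (h⁻¹ b - h⁻¹ a).val = l₂ := by
      have hq : (h⁻¹ b - h⁻¹ a).val ∈ (l₁ ::ₘ ({l₂} : Multiset ℕ)) := by
        rw [← h3, Multiset.insert_eq_cons]
        exact Multiset.mem_cons_self _ _
      simpa using hq
    rcases hmemq with hq | hq
    · refine ⟨h * c ^ (h⁻¹ a).val, ?_⟩
      have hsub : h⁻¹ b - h⁻¹ a = L := Fin.val_injective (by rw [hq, hL])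
      apply Subtype.ext
      rw [Prod.ext_iff]
      constructor
      · show (h * c ^ (h⁻¹ a).val) * c * (h * c ^ (h⁻¹ a).val)⁻¹ = σ
        rw [← hh]
        calc (h * c ^ (h⁻¹ a).val) * c * (h * c ^ (h⁻¹ a).val)⁻¹
            = h * (c ^ (h⁻¹ a).val * c * (c ^ (h⁻¹ a).val)⁻¹) * h⁻¹ := by group
          _ = h * c * h⁻¹ := by rw [hceq]
      · show (h * c ^ (h⁻¹ a).val) * Equiv.swap 0 L * (h * c ^ (h⁻¹ a).val)⁻¹ = Equiv.swap a b
        have hsw2 : c ^ (h⁻¹ a).val * Equiv.swap 0 L * (c ^ (h⁻¹ a).val)⁻¹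
            = Equiv.swap (h⁻¹ a) (h⁻¹ b) := by
          rw [← swap_apply_apply, hc, c_pow_apply, c_pow_apply, zero_add,
            Fin.cast_val_eq_self]
          congr 1
          rw [← hsub]
          exact sub_add_cancel _ _
        calc (h * c ^ (h⁻¹ a).val) * Equiv.swap 0 L * (h * c ^ (h⁻¹ a).val)⁻¹
            = h * (c ^ (h⁻¹ a).val * Equiv.swap 0 L * (c ^ (h⁻¹ a).val)⁻¹) * h⁻¹ := by group
          _ = h * Equiv.swap (h⁻¹ a) (h⁻¹ b) * h⁻¹ := by rw [hsw2]
          _ = Equiv.swap a b := by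
              rw [← swap_apply_apply]
              simp [Equiv.Perm.coe_inv, Equiv.apply_symm_apply]
    · refine ⟨h * c ^ (h⁻¹ b).val, ?_⟩
      have hq2 : h⁻¹ b - h⁻¹ a = (⟨l₂, hl₂⟩ : Fin (n + 2)) := Fin.val_injective (by rw [hq])
      have hadd : L + (⟨l₂, hl₂⟩ : Fin (n + 2)) = 0 := Fin.val_injective (by
        rw [Fin.val_add]
        show (l₁ + l₂) % (n + 2) = (0 : Fin (n + 2)).val
        rw [hsum, Nat.mod_self, Fin.val_zero])
      have hsub : h⁻¹ a - h⁻¹ b = L := by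
        have hns : h⁻¹ a - h⁻¹ b = -(h⁻¹ b - h⁻¹ a) := (neg_sub _ _).symm
        rw [hns, hq2]
        exact neg_eq_of_add_eq_zero_left hadd
      apply Subtype.ext
      rw [Prod.ext_iff]
      constructor
      · show (h * c ^ (h⁻¹ b).val) * c * (h * c ^ (h⁻¹ b).val)⁻¹ = σ
        rw [← hh]
        calc (h * c ^ (h⁻¹ b).val) * c * (h * c ^ (h⁻¹ b).val)⁻¹
            = h * (c ^ (h⁻¹ b).val * c * (c ^ (h⁻¹ b).val)⁻¹) * h⁻¹ := by group
          _ = h * c * h⁻¹ := by rw [hceq]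
      · show (h * c ^ (h⁻¹ b).val) * Equiv.swap 0 L * (h * c ^ (h⁻¹ b).val)⁻¹ = Equiv.swap a b
        have hsw2 : c ^ (h⁻¹ b).val * Equiv.swap 0 L * (c ^ (h⁻¹ b).val)⁻¹
            = Equiv.swap (h⁻¹ b) (h⁻¹ a) := by
          rw [← swap_apply_apply, hc, c_pow_apply, c_pow_apply, zero_add,
            Fin.cast_val_eq_self]
          congr 1
          rw [← hsub]
          exact sub_add_cancel _ _
        calc (h * c ^ (h⁻¹ b).val) * Equiv.swap 0 L * (h * c ^ (h⁻¹ b).val)⁻¹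
            = h * (c ^ (h⁻¹ b).val * Equiv.swap 0 L * (c ^ (h⁻¹ b).val)⁻¹) * h⁻¹ := by group
          _ = h * Equiv.swap (h⁻¹ b) (h⁻¹ a) * h⁻¹ := by rw [hsw2]
          _ = Equiv.swap a b := by
              rw [← swap_apply_apply]
              simp only [Equiv.Perm.coe_inv, Equiv.apply_symm_apply]
              exact Equiv.swap_comm b a
  -- fibers
  have hfib : ∀ g g' : Perm (Fin (n + 2)), f g' = f g →
      g' = g ∨ (l₁ = l₂ ∧ g' = g * c ^ l₁) := by
    intro g g' he
    have he1 : g' * c * g'⁻¹ = g * c * g⁻¹ := congrArg (fun s : T => s.1.1) he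
    have he2 : g' * Equiv.swap 0 L * g'⁻¹ = g * Equiv.swap 0 L * g⁻¹ :=
      congrArg (fun s : T => s.1.2) he
    have hkc : (g⁻¹ * g') * c = c * (g⁻¹ * g') := by
      have hstep : g * ((g⁻¹ * g') * c) * g'⁻¹ = g * (c * (g⁻¹ * g')) * g'⁻¹ := by
        calc g * ((g⁻¹ * g') * c) * g'⁻¹ = g' * c * g'⁻¹ := by group
          _ = g * c * g⁻¹ := he1
          _ = g * (c * (g⁻¹ * g')) * g'⁻¹ := by group
      exact mul_left_cancel (mul_right_cancel hstep)
    have hk : g⁻¹ * g' = c ^ (((g⁻¹ * g') 0 : Fin (n + 2))).val := by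
      rw [hc]
      exact eq_c_pow_of_commute (by rw [hc] at hkc; exact hkc)
    have hswap0 : (g⁻¹ * g') * Equiv.swap 0 L * (g⁻¹ * g')⁻¹ = Equiv.swap 0 L := by
      have hstep : g * ((g⁻¹ * g') * Equiv.swap 0 L * (g⁻¹ * g')⁻¹) * g⁻¹
          = g * Equiv.swap 0 L * g⁻¹ := by
        calc g * ((g⁻¹ * g') * Equiv.swap 0 L * (g⁻¹ * g')⁻¹) * g⁻¹
            = g' * Equiv.swap 0 L * g'⁻¹ := by group
          _ = g * Equiv.swap 0 L * g⁻¹ := he2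
      exact mul_left_cancel (mul_right_cancel hstep)
    have hkL : (g⁻¹ * g') L = L + (g⁻¹ * g') 0 := by
      conv_lhs => rw [hk]
      rw [hc, c_pow_apply, Fin.cast_val_eq_self]
    have hswap' : Equiv.swap (0 : Fin (n + 2)) L
        = Equiv.swap ((g⁻¹ * g') 0) (L + (g⁻¹ * g') 0) := by
      rw [← hkL, swap_apply_apply, hswap0]
    rcases swap_eq_swap (Ne.symm hL0) hswap' with ⟨hx, hy⟩ | ⟨hx, hy⟩
    · left
      have h1 : g⁻¹ * g' = 1 := by
        rw [hk, ← hx, Fin.val_zero, pow_zero]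
      exact (inv_mul_eq_one.mp h1).symm
    · right
      have hml : (g⁻¹ * g') 0 = L := hy.symm
      have hLL : L + L = 0 := by
        have hxx := hx.symm
        rw [hml] at hxx
        exact hxx
      have h2l : l₁ = l₂ := by
        have hv := congrArg Fin.val hLL
        rw [Fin.val_add, Fin.val_zero] at hv
        have hv' : (l₁ + l₁) % (n + 2) = 0 := hv
        rcases Nat.lt_or_ge (l₁ + l₁) (n + 2) with hlt | hge
        · rw [Nat.mod_eq_of_lt hlt] at hv'
          omega
        · rw [Nat.mod_eq_sub_mod hge, Nat.mod_eq_of_lt (by omega)] at hv'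
          omega
      refine ⟨h2l, ?_⟩
      have hkl : g⁻¹ * g' = c ^ l₁ := by
        rw [hk, hml, hL]
      rw [← hkl, ← mul_assoc, mul_inv_cancel, one_mul]
  have hfib2 : l₁ = l₂ → ∀ g : Perm (Fin (n + 2)), f (g * c ^ l₁) = f g := by
    intro hll g
    have hLL : L + L = 0 := Fin.val_injective (by
      rw [Fin.val_add]
      show (l₁ + l₁) % (n + 2) = (0 : Fin (n + 2)).val
      rw [show l₁ + l₁ = n + 2 from by omega, Nat.mod_self, Fin.val_zero])
    have hcast : ((l₁ : ℕ) : Fin (n + 2)) = L := Fin.val_injective (by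
      rw [Fin.val_natCast, Nat.mod_eq_of_lt hl₁, hL])
    apply Subtype.ext
    rw [Prod.ext_iff]
    constructor
    · show (g * c ^ l₁) * c * (g * c ^ l₁)⁻¹ = g * c * g⁻¹
      calc (g * c ^ l₁) * c * (g * c ^ l₁)⁻¹
          = g * (c ^ l₁ * c * (c ^ l₁)⁻¹) * g⁻¹ := by group
        _ = g * c * g⁻¹ := by rw [hceq]
    · show (g * c ^ l₁) * Equiv.swap 0 L * (g * c ^ l₁)⁻¹ = g * Equiv.swap 0 L * g⁻¹
      have hsw3 : c ^ l₁ * Equiv.swap 0 L * (c ^ l₁)⁻¹ = Equiv.swap 0 L := by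
        rw [← swap_apply_apply, hc, c_pow_apply, c_pow_apply, zero_add, hcast, hLL]
        exact Equiv.swap_comm L 0
      calc (g * c ^ l₁) * Equiv.swap 0 L * (g * c ^ l₁)⁻¹
          = g * (c ^ l₁ * Equiv.swap 0 L * (c ^ l₁)⁻¹) * g⁻¹ := by group
        _ = g * Equiv.swap 0 L * g⁻¹ := by rw [hsw3]
  have hgne : ∀ g : Perm (Fin (n + 2)), g ≠ g * c ^ l₁ := by
    intro g hgg
    have h1 : (c ^ l₁ : Perm (Fin (n + 2))) = 1 := left_eq_mul.mp hgg
    have h2 := congrArg (fun p : Perm (Fin (n + 2)) => (p 0).val) h1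
    simp only [hc, Equiv.Perm.one_apply] at h2
    rw [val_c_pow, Fin.val_zero, Nat.zero_add, Nat.mod_eq_of_lt hl₁] at h2
    omega
  -- counting
  haveI : Fintype T := Fintype.ofFinite T
  have hcard : ∀ s : T,
      Nat.card {g : Perm (Fin (n + 2)) // f g = s} = (if l₁ = l₂ then 2 else 1) := by
    intro s
    obtain ⟨g, rfl⟩ := hsurj s
    have hset : {g' : Perm (Fin (n + 2)) | f g' = f g}
        = if l₁ = l₂ then {g, g * c ^ l₁} else {g} := by
      split_ifs with hll
      · ext g'
        simp only [Set.mem_setOf_eq, Set.mem_insert_iff, Set.mem_singleton_iff]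
        constructor
        · intro hfe
          rcases hfib g g' hfe with hgg | ⟨_, hgg⟩
          · exact Or.inl hgg
          · exact Or.inr hgg
        · rintro (rfl | rfl)
          · rfl
          · exact hfib2 hll g
      · ext g'
        simp only [Set.mem_setOf_eq, Set.mem_singleton_iff]
        constructor
        · intro hfe
          rcases hfib g g' hfe with hgg | ⟨h', _⟩
          · exact hgg
          · exact absurd h' hll
        · rintro rfl
          rfl
    have hA : Nat.card {g' : Perm (Fin (n + 2)) // f g' = f g}
        = ({g' : Perm (Fin (n + 2)) | f g' = f g} : Set _).ncard :=
      Nat.card_coe_set_eq _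
    rw [hA, hset]
    split_ifs with hll
    · exact Set.ncard_pair (hgne g)
    · exact Set.ncard_singleton g
  have h1 : Nat.card (Perm (Fin (n + 2))) = Nat.factorial (n + 2) := by
    rw [Nat.card_eq_fintype_card, Fintype.card_perm, Fintype.card_fin]
  have h2 : Nat.card (Σ s : T, {g : Perm (Fin (n + 2)) // f g = s})
      = Nat.card (Perm (Fin (n + 2))) := Nat.card_congr (Equiv.sigmaFiberEquiv f)
  have hfc : ∀ s : T, Fintype.card {g : Perm (Fin (n + 2)) // f g = s}
      = (if l₁ = l₂ then 2 else 1) := by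
    intro s
    rw [← Nat.card_eq_fintype_card]
    exact hcard s
  have h3 : Nat.card (Σ s : T, {g : Perm (Fin (n + 2)) // f g = s})
      = Nat.card T * (if l₁ = l₂ then 2 else 1) := by
    rw [Nat.card_eq_fintype_card, Fintype.card_sigma,
      Finset.sum_congr rfl fun s _ => hfc s, Finset.sum_const, smul_eq_mul, Finset.card_univ,
      ← Nat.card_eq_fintype_card]
  rw [← h1, ← h2]
  exact h3.symm

end HurwitzAux

/-- For a fixed unordered partition `(λ₁, λ₂)` of `d`, the number of pairs `(σ, τ)` with
`σ ∈ 𝔖_d` a `d`-cycle, `τ` a transposition, and `στ` of cycle type `(λ₁, λ₂)`,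
divided by `d!`, equals `1/|Aut((λ₁, λ₂))|`. -/
theorem hurwitz_pairs_count (d l₁ l₂ : ℕ) (h₁ : 1 ≤ l₁) (h₂ : 1 ≤ l₂)
    (hsum : l₁ + l₂ = d) :
    (Nat.card {p : Equiv.Perm (Fin d) × Equiv.Perm (Fin d) //
        fullCycleType p.1 = ({d} : Multiset ℕ) ∧
        fullCycleType p.2 = (({2} : Multiset ℕ) + Multiset.replicate (d - 2) 1) ∧
        fullCycleType (p.1 * p.2) = (l₁ ::ₘ {l₂} : Multiset ℕ)} : ℚ)
      / (Nat.factorial d)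
      = 1 / (if l₁ = l₂ then 2 else 1) := by
  obtain ⟨n, rfl⟩ : ∃ n, d = n + 2 := ⟨d - 2, by omega⟩
  have h := HurwitzAux.main_count n l₁ l₂ h₁ h₂ (by omega)
  have hfact : ((Nat.factorial (n + 2) : ℕ) : ℚ) ≠ 0 :=
    Nat.cast_ne_zero.mpr (Nat.factorial_ne_zero _)
  split_ifs with hll
  · rw [if_pos hll] at h
    rw [div_eq_div_iff hfact two_ne_zero, one_mul]
    exact_mod_cast h
  · rw [if_neg hll] at h
    rw [mul_one] at h
    rw [div_eq_div_iff hfact one_ne_zero, one_mul, mul_one]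
    exact_mod_cast h
end
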